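/- Let α, β, γ : ℝ² → ℝ be differentiable. On U = {(t,r,θ,φ) ∈ ℝ⁴ : sin θ ≠ 0} define the vierbein h : U → (4×4 real matrices) with rows h⁰ = (α(t,r), 0, 0, 0), h¹ = (0, β(t,r), 0, 0), h² = (0, 0, γ(t,r), 0), h³ = (0, 0, 0, γ(t,r) sin θ) (i.e., the coframe h¹ = α dt, h² = β dr, h³ = γ dθ, h⁴ = γ sin θ dφ). Let X₁ = (0,0, sin φ, (cos θ/sin θ)cos φ), X₂ = (0,0, −cos φ, (cos θ/sin θ)sin φ), X₃ = (0,0,0,1); let the only nonzero f-components be f₁^1 = cos φ / sin θ, f₂^1 = sin φ / sin θ; and let λ₁, λ₂, λ₃ be the so(3)-representation matrices λ₁ with entries (2,3) = 1, (3,2) = −1; λ₂ with entries (1,2) = −1, (2,1) = 1; λ₃ with entries (1,3) = −1, (3,1) = 1 (all others zero). Then h is a symmetry frame for the SO(3) symmetry group: for all I ∈ {1,2,3}, all a, μ ∈ {0,1,2,3} and all x ∈ U, Σ_ν X_I^ν(x) ∂_ν h^a_μ(x) + Σ_ν ∂_μ X_I^ν(x) h^a_ν(x) = Σ_î f_I^î(x)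 Σ_b (λ_î)^a_b h^b_μ(x). -/

import Mathlib

open Finset

/- Coordinates are `(t, r, θ, φ) = (x 0, x 1, x 2, x 3)`. -/

/-- The μ-th partial derivative of a function on ℝ⁴. -/
noncomputable def pd (f : (Fin 4 → ℝ) → ℝ) (μ : Fin 4) (x : Fin 4 → ℝ) : ℝ :=
  fderiv ℝ f x (Pi.single μ 1)

/-- The SO(3) symmetry vector fields X₁, X₂, X₃. -/
noncomputable def XSO3 : Fin 3 → (Fin 4 → ℝ) → (Fin 4 → ℝ) :=
  ![fun x => ![0, 0, Real.sin (x 3), (Real.cos (x 2) / Real.sin (x 2)) * Real.cos (x 3)],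
    fun x => ![0, 0, -Real.cos (x 3), (Real.cos (x 2) / Real.sin (x 2)) * Real.sin (x 3)],
    fun _ => ![0, 0, 0, 1]]

/-- The functions `f I î`; the only nonzero components are
`f₁¹ = cos φ / sin θ` and `f₂¹ = sin φ / sin θ`. -/
noncomputable def fSO3 : Fin 3 → Fin 3 → (Fin 4 → ℝ) → ℝ :=
  ![![fun x => Real.cos (x 3) / Real.sin (x 2), fun _ => 0, fun _ => 0],
    ![fun x => Real.sin (x 3) / Real.sin (x 2), fun _ => 0, fun _ => 0],
    ![fun _ => 0, fun _ => 0, fun _ => 0]]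

/-- The so(3)-representation matrices λ₁, λ₂, λ₃. -/
def lamSO3 : Fin 3 → Fin 4 → Fin 4 → ℝ :=
  ![![![0, 0, 0, 0], ![0, 0, 0, 0], ![0, 0, 0, 1], ![0, 0, -1, 0]],
    ![![0, 0, 0, 0], ![0, 0, -1, 0], ![0, 1, 0, 0], ![0, 0, 0, 0]],
    ![![0, 0, 0, 0], ![0, 0, 0, -1], ![0, 0, 0, 0], ![0, 1, 0, 0]]]

/-- The spherically symmetric vierbein `h¹ = α dt`, `h² = β dr`, `h³ = γ dθ`,
`h⁴ = γ sin θ dφ`, as a matrix field `h x a μ`. -/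
noncomputable def hSO3 (α β γ : ℝ × ℝ → ℝ) (x : Fin 4 → ℝ) : Fin 4 → Fin 4 → ℝ :=
  ![![α (x 0, x 1), 0, 0, 0],
    ![0, β (x 0, x 1), 0, 0],
    ![0, 0, γ (x 0, x 1), 0],
    ![0, 0, 0, γ (x 0, x 1) * Real.sin (x 2)]]

/-! Every component of the vierbein depends only on `(t, r, θ)`, and the fields `X_I` depend
only on `(θ, φ)` and have no `t`- or `r`-component. By the chain and product rules each of the
48 component equations therefore becomes a trigonometric identity in `θ` and `φ`; the only
nontrivial input is `d/dθ (cos θ / sin θ) = -1 / sin² θ`, valid where `sin θ ≠ 0`. -/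

section PartialDerivatives

variable {f : (Fin 4 → ℝ) → ℝ} {f' : (Fin 4 → ℝ) →L[ℝ] ℝ} {x : Fin 4 → ℝ}

lemma HasFDerivAt.pd_eq (hf : HasFDerivAt f f' x) (μ : Fin 4) :
    pd f μ x = f' (Pi.single μ 1) := by
  rw [pd, hf.fderiv]

lemma pd_const (c : ℝ) (μ : Fin 4) : pd (fun _ => c) μ x = 0 := by
  simp [pd]

lemma hasFDerivAt_comp_apply {g : ℝ → ℝ} {g' : ℝ} (i : Fin 4) (hg : HasDerivAt g g' (x i)) :
    HasFDerivAt (fun y : Fin 4 → ℝ => g (y i))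
      (g' • (ContinuousLinearMap.proj i : (Fin 4 → ℝ) →L[ℝ] ℝ)) x :=
  hg.comp_hasFDerivAt x (ContinuousLinearMap.proj i : (Fin 4 → ℝ) →L[ℝ] ℝ).hasFDerivAt

lemma pd_comp_apply {g : ℝ → ℝ} {g' : ℝ} (i μ : Fin 4) (hg : HasDerivAt g g' (x i)) :
    pd (fun y => g (y i)) μ x = g' * (Pi.single μ 1 : Fin 4 → ℝ) i := by
  simp [(hasFDerivAt_comp_apply i hg).pd_eq]

lemma pd_comp_apply_mul_comp_apply {g k : ℝ → ℝ} {g' k' : ℝ} (i j μ : Fin 4)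
    (hg : HasDerivAt g g' (x i)) (hk : HasDerivAt k k' (x j)) :
    pd (fun y => g (y i) * k (y j)) μ x
      = g' * (Pi.single μ 1 : Fin 4 → ℝ) i * k (x j)
        + g (x i) * (k' * (Pi.single μ 1 : Fin 4 → ℝ) j) := by
  rw [((hasFDerivAt_comp_apply i hg).fun_mul (hasFDerivAt_comp_apply j hk)).pd_eq]
  simp only [add_apply, smul_apply, ContinuousLinearMap.proj_apply, smul_eq_mul]
  ring

lemma hasFDerivAt_comp_apply_zero_one {F : ℝ × ℝ → ℝ} (hF : DifferentiableAt ℝ F (x 0, x 1)) :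
    HasFDerivAt (fun y : Fin 4 → ℝ => F (y 0, y 1))
      ((fderiv ℝ F (x 0, x 1)).comp
        ((ContinuousLinearMap.proj 0).prod (ContinuousLinearMap.proj 1))) x :=
  hF.hasFDerivAt.comp x ((ContinuousLinearMap.proj 0).prod (ContinuousLinearMap.proj 1) :
    (Fin 4 → ℝ) →L[ℝ] ℝ × ℝ).hasFDerivAt

lemma pd_comp_apply_zero_one {F : ℝ × ℝ → ℝ} (hF : DifferentiableAt ℝ F (x 0, x 1)) (μ : Fin 4) :
    pd (fun y => F (y 0, y 1)) μ x
      = fderiv ℝ F (x 0, x 1) ((Pi.single μ 1 : Fin 4 → ℝ) 0, (Pi.single μ 1 : Fin 4 → ℝ) 1) :=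
  (hasFDerivAt_comp_apply_zero_one hF).pd_eq μ

lemma pd_comp_apply_zero_one_mul_sin {F : ℝ × ℝ → ℝ} (hF : DifferentiableAt ℝ F (x 0, x 1))
    (μ : Fin 4) :
    pd (fun y => F (y 0, y 1) * Real.sin (y 2)) μ x
      = fderiv ℝ F (x 0, x 1) ((Pi.single μ 1 : Fin 4 → ℝ) 0, (Pi.single μ 1 : Fin 4 → ℝ) 1)
          * Real.sin (x 2)
        + F (x 0, x 1) * (Real.cos (x 2) * (Pi.single μ 1 : Fin 4 → ℝ) 2) := by
  rw [((hasFDerivAt_comp_apply_zero_one hF).fun_mul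
    (hasFDerivAt_comp_apply 2 (Real.hasDerivAt_sin (x 2)))).pd_eq]
  simp only [add_apply, smul_apply, ContinuousLinearMap.comp_apply, ContinuousLinearMap.prod_apply,
    ContinuousLinearMap.proj_apply, smul_eq_mul]
  ring

end PartialDerivatives

lemma Real.hasDerivAt_cos_div_sin {θ : ℝ} (hθ : Real.sin θ ≠ 0) :
    HasDerivAt (fun θ => Real.cos θ / Real.sin θ) (-1 / Real.sin θ ^ 2) θ := by
  refine ((Real.hasDerivAt_cos θ).div (Real.hasDerivAt_sin θ) hθ).congr_deriv ?_
  rw [← Real.sin_sq_add_cos_sq θ]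
  ring

section SymmetryVectorFields

variable (μ : Fin 4) (x : Fin 4 → ℝ)

lemma pd_sin_apply_three :
    pd (fun y => Real.sin (y 3)) μ x = Real.cos (x 3) * (Pi.single μ 1 : Fin 4 → ℝ) 3 :=
  pd_comp_apply 3 μ (Real.hasDerivAt_sin (x 3))

lemma pd_neg_cos_apply_three :
    pd (fun y => -Real.cos (y 3)) μ x = Real.sin (x 3) * (Pi.single μ 1 : Fin 4 → ℝ) 3 := by
  rw [pd_comp_apply (g := fun θ => -Real.cos θ) 3 μ (Real.hasDerivAt_cos (x 3)).neg, neg_neg]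

variable {x}

lemma pd_cot_mul_cos (hx : Real.sin (x 2) ≠ 0) :
    pd (fun y => Real.cos (y 2) / Real.sin (y 2) * Real.cos (y 3)) μ x
      = -1 / Real.sin (x 2) ^ 2 * (Pi.single μ 1 : Fin 4 → ℝ) 2 * Real.cos (x 3)
        + Real.cos (x 2) / Real.sin (x 2) * (-Real.sin (x 3) * (Pi.single μ 1 : Fin 4 → ℝ) 3) :=
  pd_comp_apply_mul_comp_apply (g := fun θ => Real.cos θ / Real.sin θ) 2 3 μ
    (Real.hasDerivAt_cos_div_sin hx) (Real.hasDerivAt_cos (x 3))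

lemma pd_cot_mul_sin (hx : Real.sin (x 2) ≠ 0) :
    pd (fun y => Real.cos (y 2) / Real.sin (y 2) * Real.sin (y 3)) μ x
      = -1 / Real.sin (x 2) ^ 2 * (Pi.single μ 1 : Fin 4 → ℝ) 2 * Real.sin (x 3)
        + Real.cos (x 2) / Real.sin (x 2) * (Real.cos (x 3) * (Pi.single μ 1 : Fin 4 → ℝ) 3) :=
  pd_comp_apply_mul_comp_apply (g := fun θ => Real.cos θ / Real.sin θ) 2 3 μ
    (Real.hasDerivAt_cos_div_sin hx) (Real.hasDerivAt_sin (x 3))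

end SymmetryVectorFields

theorem stmt_17 (α β γ : ℝ × ℝ → ℝ)
    (hα : Differentiable ℝ α) (hβ : Differentiable ℝ β) (hγ : Differentiable ℝ γ) :
    ∀ (I : Fin 3) (a μ : Fin 4) (x : Fin 4 → ℝ), Real.sin (x 2) ≠ 0 →
      (∑ ν, XSO3 I x ν * pd (fun y => hSO3 α β γ y a μ) ν x)
        + (∑ ν, pd (fun y => XSO3 I y ν) μ x * hSO3 α β γ x a ν)
      = ∑ i, fSO3 I i x * ∑ b, lamSO3 i a b * hSO3 α β γ x b μ := by
  intro I a μ x hx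
  fin_cases I <;> fin_cases a <;> fin_cases μ <;>
    simp [XSO3, fSO3, lamSO3, hSO3, Fin.sum_univ_three, Fin.sum_univ_four, Prod.mk_zero_zero,
      Pi.single_apply, pd_const, pd_comp_apply_zero_one (hα _), pd_comp_apply_zero_one (hβ _),
      pd_comp_apply_zero_one (hγ _), pd_comp_apply_zero_one_mul_sin (hγ _), pd_sin_apply_three,
      pd_neg_cos_apply_three, pd_cot_mul_cos _ hx, pd_cot_mul_sin _ hx] <;>
    field_simp <;> ring_nf
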